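/- arXiv:1907.09976 — 11 statements merged into one kernel-verified Lean document; each statement's English description precedes it below -/
import Mathlib

section
/- Let k ≥ ℓ ≥ 1 be natural numbers. Every (k|ℓ)-admissible real number ε satisfies ε ≤ 2^{-k} · ∑_{i=ℓ}^{k} C(k,i), where C(k,i) denotes the binomial coefficient. -/
/-! The power set of a `k`-element set is union-closed and `k|ℓ`-separated. Its only `k`-subset
is the whole set, so admissibility bounds `ε` by the proportion of subsets with at least `ℓ`
elements, which is exactly `2^{-k} ∑_{i=ℓ}^{k} C(k,i)`. -/

/-- `𝒜` is a union-closed family on the finite set `X`: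
every member is a subset of `X`, `∅ ∈ 𝒜`, `X ∈ 𝒜`, and `𝒜` is closed under unions. -/
def UnionClosedOn (X : Finset ℕ) (𝒜 : Finset (Finset ℕ)) : Prop :=
  (∀ A ∈ 𝒜, A ⊆ X) ∧ ∅ ∈ 𝒜 ∧ X ∈ 𝒜 ∧ ∀ A₁ ∈ 𝒜, ∀ A₂ ∈ 𝒜, A₁ ∪ A₂ ∈ 𝒜

/-- `𝒜` is `k|ℓ`-separated on `X`: `|X| ≥ k` and for any `k` distinct elements of `X`
(the first `ℓ` of them forming `T`, the remaining `k - ℓ` forming `U`)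
there is `A ∈ 𝒜` containing all of `T` and disjoint from `U`. -/
def Separated (k ℓ : ℕ) (X : Finset ℕ) (𝒜 : Finset (Finset ℕ)) : Prop :=
  k ≤ X.card ∧
    ∀ T U : Finset ℕ, T ⊆ X → U ⊆ X → Disjoint T U → T.card = ℓ → U.card = k - ℓ →
      ∃ A ∈ 𝒜, T ⊆ A ∧ U ∩ A = ∅

/-- `ε ≥ 0` is `(k|ℓ)`-admissible: for every `k|ℓ`-separated union-closed family `𝒜` on a
finite nonempty set `X` there is `S ⊆ X` with `|S| = k` such that at least `ε·|𝒜|`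
members `A` of `𝒜` satisfy `|A ∩ S| ≥ ℓ`. -/
def Admissible (k ℓ : ℕ) (ε : ℝ) : Prop :=
  0 ≤ ε ∧
    ∀ (X : Finset ℕ) (𝒜 : Finset (Finset ℕ)), X.Nonempty → UnionClosedOn X 𝒜 →
      Separated k ℓ X 𝒜 →
        ∃ S ⊆ X, S.card = k ∧
          ε * (𝒜.card : ℝ) ≤ (((𝒜.filter fun A => ℓ ≤ (A ∩ S).card)).card : ℝ)


open Finset

theorem unionClosedOn_powerset (X : Finset ℕ) : UnionClosedOn X X.powerset := by
  refine ⟨fun A hA => mem_powerset.mp hA, empty_mem_powerset X, mem_powerset_self X,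
    fun A₁ h₁ A₂ h₂ => ?_⟩
  rw [mem_powerset] at *
  exact union_subset h₁ h₂

theorem separated_powerset {k ℓ : ℕ} {X : Finset ℕ} (hX : k ≤ X.card) :
    Separated k ℓ X X.powerset :=
  ⟨hX, fun T _ hT _ hTU _ _ =>
    ⟨T, mem_powerset.mpr hT, subset_rfl, disjoint_iff_inter_eq_empty.mp hTU.symm⟩⟩

theorem card_filter_le_card_powerset {α : Type*} (X : Finset α) (ℓ : ℕ) :
    #{A ∈ X.powerset | ℓ ≤ #A} = ∑ i ∈ Icc ℓ #X, (#X).choose i := by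
  rw [card_eq_sum_card_fiberwise (f := card) (t := Icc ℓ #X)]
  · refine sum_congr rfl fun i hi => ?_
    rw [← card_powersetCard]
    congr 1
    ext A
    simp only [mem_filter, mem_powerset, mem_powersetCard]
    constructor
    · rintro ⟨⟨hA, -⟩, rfl⟩
      exact ⟨hA, rfl⟩
    · rintro ⟨hA, rfl⟩
      exact ⟨⟨hA, (mem_Icc.mp hi).1⟩, rfl⟩
  · intro A hA
    simp only [coe_filter, mem_powerset, Set.mem_ofPred_eq] at hA
    exact mem_Icc.mpr ⟨hA.2, card_le_card hA.1⟩

theorem stmt0 (k ℓ : ℕ) (hℓ : 1 ≤ ℓ) (hk : ℓ ≤ k) (ε : ℝ) (hε : Admissible k ℓ ε) :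
    ε ≤ (2 : ℝ) ^ (-(k : ℤ)) * ∑ i ∈ Finset.Icc ℓ k, (k.choose i : ℝ) := by
  set X := range k
  have hX : X.Nonempty := nonempty_range_iff.mpr (by omega)
  obtain ⟨S, hSX, hS, hcount⟩ :=
    hε.2 X X.powerset hX (unionClosedOn_powerset X) (separated_powerset (card_range k).ge)
  obtain rfl : S = X := eq_of_subset_of_card_le hSX (by rw [card_range, hS])
  have hfilter : {A ∈ X.powerset | ℓ ≤ #(A ∩ X)} = {A ∈ X.powerset | ℓ ≤ #A} :=
    filter_congr fun A hA => by rw [inter_eq_left.mpr (mem_powerset.mp hA)]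
  rw [hfilter, card_filter_le_card_powerset, card_powerset, hS] at hcount
  push_cast at hcount
  rw [zpow_neg, zpow_natCast, inv_mul_eq_div, le_div_iff₀ (by positivity)]
  exact hcount
end

section
/- Let k, k'', ℓ be natural numbers with k ≥ ℓ ≥ 1 and k'' ≥ 1. If ε ≥ 0 is (k|ℓ)-admissible and ε'' ≥ 0 is (k''|k'')-admissible, then ε·ε'' is ((k+k'')|(ℓ+k''))-admissible. -/
theorem stmt2 (k k'' ℓ : ℕ) (hℓ : 1 ≤ ℓ) (hk : ℓ ≤ k) (hk'' : 1 ≤ k'')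
    (ε ε'' : ℝ) (hε : 0 ≤ ε) (hε'' : 0 ≤ ε'')
    (h : Admissible k ℓ ε) (h'' : Admissible k'' k'' ε'') :
    Admissible (k + k'') (ℓ + k'') (ε * ε'') := by
  obtain ⟨-, h2⟩ := h
  obtain ⟨-, h2''⟩ := h''
  refine ⟨mul_nonneg hε hε'', ?_⟩
  intro X 𝒜 hX hUC hSep
  obtain ⟨hXcard, hsep⟩ := hSep
  obtain ⟨hsub, hempty, hXmem, hunion⟩ := hUC
  -- Step 1: 𝒜 is k''|k''-separated
  have sep'' : Separated k'' k'' X 𝒜 := by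
    refine ⟨by omega, ?_⟩
    intro T U hT hU hd hTc hUc
    have hU0 : U = ∅ := Finset.card_eq_zero.mp (by omega)
    obtain ⟨T', hTT', hT'X, hT'c⟩ :=
      Finset.exists_subsuperset_card_eq (n := ℓ + k'') hT (by omega) (by omega)
    obtain ⟨U', hU'sub, hU'c⟩ := Finset.exists_subset_card_eq (s := X \ T') (n := k - ℓ) (by
      have := Finset.card_sdiff_of_subset hT'X
      omega)
    have hdisj : Disjoint T' U' := by
      refine Finset.disjoint_left.mpr fun x hx hx' => ?_
      exact (Finset.mem_sdiff.mp (hU'sub hx')).2 hx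
    obtain ⟨A, hA, hTA, hUA⟩ := hsep T' U' hT'X
      (hU'sub.trans (Finset.sdiff_subset)) hdisj hT'c (by omega)
    exact ⟨A, hA, hTT'.trans hTA, by simp [hU0]⟩
  obtain ⟨S'', hS''X, hS''card, hcount''⟩ :=
    h2'' X 𝒜 hX ⟨hsub, hempty, hXmem, hunion⟩ sep''
  set ℬ : Finset (Finset ℕ) := 𝒜.filter (fun A => k'' ≤ (A ∩ S'').card) with hℬ
  have hBmem : ∀ A, A ∈ ℬ ↔ A ∈ 𝒜 ∧ S'' ⊆ A := by
    intro A
    simp only [hℬ, Finset.mem_filter]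
    constructor
    · rintro ⟨hA, hc⟩
      refine ⟨hA, ?_⟩
      have h1 : A ∩ S'' ⊆ S'' := Finset.inter_subset_right
      have h2 := Finset.eq_of_subset_of_card_le h1 (by omega)
      exact Finset.inter_eq_right.mp h2
    · rintro ⟨hA, hS⟩
      exact ⟨hA, by rw [Finset.inter_eq_right.mpr hS, hS''card]⟩
  set X' : Finset ℕ := X \ S'' with hX'
  have hX'card : X'.card = X.card - k'' := by
    rw [hX', Finset.card_sdiff_of_subset hS''X, hS''card]
  set 𝒞 : Finset (Finset ℕ) := insert ∅ (ℬ.image (· \ S'')) with h𝒞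
  have hCsub : ∀ C ∈ 𝒞, C ⊆ X' := by
    intro C hC
    rcases Finset.mem_insert.mp hC with rfl | hC
    · exact Finset.empty_subset _
    · obtain ⟨A, hA, rfl⟩ := Finset.mem_image.mp hC
      exact Finset.sdiff_subset_sdiff (hsub A ((hBmem A).mp hA).1) le_rfl
  have hXB : X ∈ ℬ := (hBmem X).mpr ⟨hXmem, hS''X⟩
  have hCuc : UnionClosedOn X' 𝒞 := by
    refine ⟨hCsub, Finset.mem_insert_self _ _, ?_, ?_⟩
    · exact Finset.mem_insert.mpr (Or.inr (Finset.mem_image.mpr ⟨X, hXB, rfl⟩))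
    · intro C₁ hC₁ C₂ hC₂
      rcases Finset.mem_insert.mp hC₁ with rfl | hC₁
      · simpa using hC₂
      rcases Finset.mem_insert.mp hC₂ with rfl | hC₂
      · rw [Finset.union_empty]
        exact Finset.mem_insert.mpr (Or.inr hC₁)
      obtain ⟨A₁, hA₁, rfl⟩ := Finset.mem_image.mp hC₁
      obtain ⟨A₂, hA₂, rfl⟩ := Finset.mem_image.mp hC₂
      refine Finset.mem_insert.mpr (Or.inr (Finset.mem_image.mpr ⟨A₁ ∪ A₂, ?_, ?_⟩))
      · obtain ⟨hA₁', hS₁⟩ := (hBmem A₁).mp hA₁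
        obtain ⟨hA₂', hS₂⟩ := (hBmem A₂).mp hA₂
        exact (hBmem _).mpr ⟨hunion A₁ hA₁' A₂ hA₂', hS₁.trans Finset.subset_union_left⟩
      · exact Finset.union_sdiff_distrib A₁ A₂ S''
  have hX'ne : X'.Nonempty := Finset.card_pos.mp (by omega)
  have hCsep : Separated k ℓ X' 𝒞 := by
    refine ⟨by omega, ?_⟩
    intro T U hT hU hd hTc hUc
    have hTS : Disjoint T S'' := Finset.disjoint_left.mpr fun x hx hx' =>
      (Finset.mem_sdiff.mp (hT hx)).2 hx'
    have hUS : Disjoint U S'' := Finset.disjoint_left.mpr fun x hx hx' =>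
      (Finset.mem_sdiff.mp (hU hx)).2 hx'
    have hTUX : T ∪ S'' ⊆ X := Finset.union_subset (hT.trans Finset.sdiff_subset) hS''X
    have hdisj : Disjoint (T ∪ S'') U :=
      Finset.disjoint_union_left.mpr ⟨hd, hUS.symm⟩
    have hTUc : (T ∪ S'').card = ℓ + k'' := by
      rw [Finset.card_union_of_disjoint hTS, hTc, hS''card]
    obtain ⟨A, hA, hTA, hUA⟩ := hsep (T ∪ S'') U hTUX
      (hU.trans Finset.sdiff_subset) hdisj hTUc (by omega)
    have hAB : A ∈ ℬ := (hBmem A).mpr ⟨hA, Finset.subset_union_right.trans hTA⟩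
    refine ⟨A \ S'', Finset.mem_insert.mpr (Or.inr (Finset.mem_image.mpr ⟨A, hAB, rfl⟩)), ?_, ?_⟩
    · intro x hx
      exact Finset.mem_sdiff.mpr ⟨hTA (Finset.mem_union_left _ hx),
        fun hx' => Finset.disjoint_left.mp hTS hx hx'⟩
    · apply Finset.eq_empty_of_forall_notMem
      intro x hx
      obtain ⟨hxU, hxA⟩ := Finset.mem_inter.mp hx
      have : x ∈ U ∩ A := Finset.mem_inter.mpr ⟨hxU, (Finset.mem_sdiff.mp hxA).1⟩
      simp [hUA] at this
  obtain ⟨S', hS'X', hS'card, hcount⟩ := h2 X' 𝒞 hX'ne hCuc hCsep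
  have hS'S'' : Disjoint S' S'' := Finset.disjoint_left.mpr fun x hx hx' =>
    (Finset.mem_sdiff.mp (hS'X' hx)).2 hx'
  refine ⟨S' ∪ S'', Finset.union_subset (hS'X'.trans Finset.sdiff_subset) hS''X, ?_, ?_⟩
  · rw [Finset.card_union_of_disjoint hS'S'', hS'card, hS''card]
  -- counting
  have hcardBC : (ℬ.card : ℝ) ≤ (𝒞.card : ℝ) := by
    have h1 : (ℬ.image (· \ S'')).card = ℬ.card := by
      apply Finset.card_image_of_injOn
      intro A₁ hA₁ A₂ hA₂ hE
      have e₁ : A₁ = A₁ \ S'' ∪ S'' :=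
        (Finset.sdiff_union_of_subset ((hBmem A₁).mp hA₁).2).symm
      have e₂ : A₂ = A₂ \ S'' ∪ S'' :=
        (Finset.sdiff_union_of_subset ((hBmem A₂).mp hA₂).2).symm
      rw [e₁, e₂]
      simp only at hE
      rw [hE]
    have h2 : (ℬ.image (· \ S'')).card ≤ 𝒞.card := Finset.card_le_card (Finset.subset_insert _ _)
    exact_mod_cast h1 ▸ h2
  have hinj : (𝒞.filter fun C => ℓ ≤ (C ∩ S').card).card ≤
      (𝒜.filter fun A => ℓ + k'' ≤ (A ∩ (S' ∪ S'')).card).card := by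
    apply Finset.card_le_card_of_injOn (fun C => C ∪ S'')
    · intro C hC
      obtain ⟨hC𝒞, hCc⟩ := Finset.mem_filter.mp hC
      rcases Finset.mem_insert.mp hC𝒞 with rfl | hCi
      · simp at hCc; omega
      obtain ⟨A, hAB, rfl⟩ := Finset.mem_image.mp hCi
      obtain ⟨hA𝒜, hSA⟩ := (hBmem A).mp hAB
      show A \ S'' ∪ S'' ∈ (𝒜.filter fun A => ℓ + k'' ≤ (A ∩ (S' ∪ S'')).card)
      rw [Finset.sdiff_union_of_subset hSA]
      refine Finset.mem_filter.mpr ⟨hA𝒜, ?_⟩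
      have hsplit : A ∩ (S' ∪ S'') = (A ∩ S') ∪ (A ∩ S'') := Finset.inter_union_distrib_left A S' S''
      have hdisj2 : Disjoint (A ∩ S') (A ∩ S'') :=
        hS'S''.mono Finset.inter_subset_right Finset.inter_subset_right
      have hc2 : (A ∩ S'').card = k'' := by
        rw [Finset.inter_eq_right.mpr hSA, hS''card]
      have hc1 : ℓ ≤ (A ∩ S').card := by
        have : (A \ S'') ∩ S' ⊆ A ∩ S' :=
          Finset.inter_subset_inter Finset.sdiff_subset le_rfl
        exact le_trans hCc (Finset.card_le_card this)
      rw [hsplit, Finset.card_union_of_disjoint hdisj2, hc2]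
      omega
    · intro C₁ hC₁ C₂ hC₂ hE
      have d₁ : Disjoint C₁ S'' :=
        Finset.disjoint_left.mpr fun x hx hx' =>
          (Finset.mem_sdiff.mp (hCsub C₁ (Finset.mem_filter.mp hC₁).1 hx)).2 hx'
      have d₂ : Disjoint C₂ S'' :=
        Finset.disjoint_left.mpr fun x hx hx' =>
          (Finset.mem_sdiff.mp (hCsub C₂ (Finset.mem_filter.mp hC₂).1 hx)).2 hx'
      have e₁ : (C₁ ∪ S'') \ S'' = C₁ := by
        rw [Finset.union_sdiff_right, Finset.sdiff_eq_self_of_disjoint d₁]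
      have e₂ : (C₂ ∪ S'') \ S'' = C₂ := by
        rw [Finset.union_sdiff_right, Finset.sdiff_eq_self_of_disjoint d₂]
      rw [← e₁, ← e₂]
      exact congrArg (· \ S'') hE
  calc ε * ε'' * (𝒜.card : ℝ) = ε * (ε'' * 𝒜.card) := by ring
    _ ≤ ε * (ℬ.card : ℝ) := by
        apply mul_le_mul_of_nonneg_left _ hε
        exact hcount''
    _ ≤ ε * (𝒞.card : ℝ) := mul_le_mul_of_nonneg_left hcardBC hε
    _ ≤ ((𝒞.filter fun C => ℓ ≤ (C ∩ S').card).card : ℝ) := hcount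
    _ ≤ _ := by exact_mod_cast hinj
end

section
/- Let k, k' ≥ 1 be natural numbers. If ε ≥ 0 is (k|k)-admissible and ε' ≥ 0 is (k'|k')-admissible, then ε·ε' is ((k+k')|(k+k'))-admissible. -/
/-
For `ℓ = k` the separation condition only asks for a member containing `k` given points, which
`X` itself is, and `|A ∩ S| ≥ k = |S|` just says `S ⊆ A`. So choose `S` by `(k|k)`-admissibility,
pass to the link `{A \ S : S ⊆ A ∈ 𝒜} ∪ {∅}`, a union-closed family on `X \ S` at least as large
as `{A ∈ 𝒜 : S ⊆ A}`, and choose `S'` in it by `(k'|k')`-admissibility. As `S'` is nonempty, each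
member of the link containing `S'` comes from some `A ∈ 𝒜` containing `S ∪ S'`.
-/

open Finset

namespace Finset

variable {α : Type*} [DecidableEq α]

theorem card_le_card_inter_iff_subset {A S : Finset α} : #S ≤ #(A ∩ S) ↔ S ⊆ A := by
  refine ⟨fun h => inter_eq_right.1 (eq_of_subset_of_card_le inter_subset_right h), fun h => ?_⟩
  rw [inter_eq_right.2 h]

theorem injOn_sdiff_right (S : Finset α) : Set.InjOn (· \ S) {A | S ⊆ A} := by
  intro A₁ h₁ A₂ h₂ h
  rw [← sdiff_union_of_subset h₁, ← sdiff_union_of_subset h₂]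
  exact congrArg (· ∪ S) h

def link (𝒜 : Finset (Finset α)) (S : Finset α) : Finset (Finset α) :=
  insert ∅ ((𝒜.filter (S ⊆ ·)).image (· \ S))

theorem card_filter_subset_le_card_link (𝒜 : Finset (Finset α)) (S : Finset α) :
    #(𝒜.filter (S ⊆ ·)) ≤ #(link 𝒜 S) := by
  have hinj : Set.InjOn (· \ S) (𝒜.filter (S ⊆ ·)) :=
    (injOn_sdiff_right S).mono fun A hA => (mem_filter.1 hA).2
  rw [← card_image_of_injOn hinj]
  exact card_le_card (subset_insert _ _)

theorem card_filter_link_le {𝒜 : Finset (Finset α)} {S S' : Finset α} (hS' : S'.Nonempty) :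
    #((link 𝒜 S).filter (S' ⊆ ·)) ≤ #(𝒜.filter (S ∪ S' ⊆ ·)) := by
  refine (card_le_card fun B hB => ?_).trans (card_image_le (f := (· \ S)))
  obtain ⟨hB, hS'B⟩ := mem_filter.1 hB
  rcases mem_insert.1 hB with rfl | hB
  · exact absurd (subset_empty.1 hS'B) hS'.ne_empty
  obtain ⟨A, hA, rfl⟩ := mem_image.1 hB
  obtain ⟨hA, hSA⟩ := mem_filter.1 hA
  exact mem_image.2 ⟨A, mem_filter.2 ⟨hA, union_subset hSA (hS'B.trans sdiff_subset)⟩, rfl⟩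

end Finset

theorem UnionClosedOn.sdiff_link {X S : Finset ℕ} {𝒜 : Finset (Finset ℕ)} (h𝒜 : UnionClosedOn X 𝒜)
    (hSX : S ⊆ X) : UnionClosedOn (X \ S) (link 𝒜 S) := by
  obtain ⟨hsub, -, hX, hunion⟩ := h𝒜
  have mem_link {A} (hA : A ∈ 𝒜) (hSA : S ⊆ A) : A \ S ∈ link 𝒜 S :=
    mem_insert_of_mem (mem_image_of_mem _ (mem_filter.2 ⟨hA, hSA⟩))
  refine ⟨fun B hB => ?_, mem_insert_self _ _, mem_link hX hSX, fun B₁ hB₁ B₂ hB₂ => ?_⟩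
  · rcases mem_insert.1 hB with rfl | hB
    · exact empty_subset _
    obtain ⟨A, hA, rfl⟩ := mem_image.1 hB
    exact sdiff_subset_sdiff (hsub A (mem_filter.1 hA).1) le_rfl
  rcases mem_insert.1 hB₁ with rfl | hB₁
  · rwa [empty_union]
  rcases mem_insert.1 hB₂ with rfl | hB₂
  · rwa [union_empty]
  obtain ⟨A₁, hA₁, rfl⟩ := mem_image.1 hB₁
  obtain ⟨A₂, hA₂, rfl⟩ := mem_image.1 hB₂
  rw [← union_sdiff_distrib]
  exact mem_link (hunion _ (mem_filter.1 hA₁).1 _ (mem_filter.1 hA₂).1)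
    ((mem_filter.1 hA₁).2.trans subset_union_left)

theorem separated_self_of_mem {k : ℕ} {X : Finset ℕ} {𝒜 : Finset (Finset ℕ)} (hX : X ∈ 𝒜)
    (hk : k ≤ #X) : Separated k k X 𝒜 :=
  ⟨hk, fun _ U hT _ _ _ hU => ⟨X, hX, hT, by rw [card_eq_zero.1 (hU.trans (Nat.sub_self k)),
    empty_inter]⟩⟩

theorem admissible_self_iff {k : ℕ} {ε : ℝ} :
    Admissible k k ε ↔ 0 ≤ ε ∧ ∀ (X : Finset ℕ) (𝒜 : Finset (Finset ℕ)), X.Nonempty →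
      UnionClosedOn X 𝒜 → k ≤ #X → ∃ S ⊆ X, #S = k ∧ ε * #𝒜 ≤ #(𝒜.filter (S ⊆ ·)) := by
  refine and_congr_right fun _ => forall₂_congr fun X 𝒜 => imp_congr_right fun _ =>
    forall_congr' fun h𝒜 => ?_
  refine imp_congr ⟨And.left, separated_self_of_mem h𝒜.2.2.1⟩ (exists_congr fun S => ?_)
  refine and_congr_right fun _ => and_congr_right fun hS => ?_
  simp_rw [← hS, card_le_card_inter_iff_subset]

theorem stmt3_general (k k' : ℕ) (hk' : 1 ≤ k')
    (ε ε' : ℝ)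
    (h : Admissible k k ε) (h' : Admissible k' k' ε') :
    Admissible (k + k') (k + k') (ε * ε') := by
  obtain ⟨hε, hchoose⟩ := admissible_self_iff.1 h
  obtain ⟨hε', hchoose'⟩ := admissible_self_iff.1 h'
  refine admissible_self_iff.2 ⟨mul_nonneg hε hε', fun X 𝒜 hX h𝒜 hcard => ?_⟩
  obtain ⟨S, hSX, rfl, hS⟩ := hchoose X 𝒜 hX h𝒜 (by omega)
  have hcard' : k' ≤ #(X \ S) := by rw [card_sdiff_of_subset hSX]; omega
  obtain ⟨S', hS'X, rfl, hS'⟩ :=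
    hchoose' (X \ S) (link 𝒜 S) (card_pos.1 (by omega)) (h𝒜.sdiff_link hSX) hcard'
  have hdisj : Disjoint S S' := disjoint_of_subset_right hS'X disjoint_sdiff
  refine ⟨S ∪ S', union_subset hSX (hS'X.trans sdiff_subset), card_union_of_disjoint hdisj, ?_⟩
  calc ε * ε' * #𝒜 = ε' * (ε * #𝒜) := by ring
    _ ≤ ε' * #(link 𝒜 S) := by
      gcongr
      exact hS.trans (mod_cast card_filter_subset_le_card_link 𝒜 S)
    _ ≤ #((link 𝒜 S).filter (S' ⊆ ·)) := hS'
    _ ≤ #(𝒜.filter (S ∪ S' ⊆ ·)) := mod_cast card_filter_link_le (card_pos.1 (by omega))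

theorem stmt3 (k k' : ℕ) (hk : 1 ≤ k) (hk' : 1 ≤ k')
    (ε ε' : ℝ) (hε : 0 ≤ ε) (hε' : 0 ≤ ε')
    (h : Admissible k k ε) (h' : Admissible k' k' ε') :
    Admissible (k + k') (k + k') (ε * ε') :=
  stmt3_general k k' hk' ε ε' h h'
end

section
/- Let k, k', ℓ be natural numbers with k ≥ ℓ ≥ 1 and k' ≥ ℓ. Let 𝒜 be a (k+k')|ℓ-separated union-closed family on a finite nonempty set X, and let S ⊆ X with |S| = k. Then the family 𝒜' := {A ∈ 𝒜 : A ∩ S = ∅} is a union-closed family on the set X ∖ S (in particular ∅ ∈ 𝒜', X ∖ S ∈ 𝒜', and 𝒜' is closed under unions), and 𝒜' is k'|ℓ-separated. -/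
theorem stmt7 (k k' ℓ : ℕ) (hℓ : 1 ≤ ℓ) (hk : ℓ ≤ k) (hk' : ℓ ≤ k')
    (X : Finset ℕ) (hXne : X.Nonempty) (𝒜 : Finset (Finset ℕ))
    (hUC : UnionClosedOn X 𝒜) (hSep : Separated (k + k') ℓ X 𝒜)
    (S : Finset ℕ) (hS : S ⊆ X) (hScard : S.card = k) :
    UnionClosedOn (X \ S) (𝒜.filter fun A => A ∩ S = ∅) ∧
      Separated k' ℓ (X \ S) (𝒜.filter fun A => A ∩ S = ∅) := by
  obtain ⟨hsub, hemp, hXmem, hunion⟩ := hUC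
  obtain ⟨hcard, hsep⟩ := hSep
  -- for each x ∈ X \ S, there is A ∈ 𝒜 with x ∈ A and A ∩ S = ∅
  have key : ∀ x ∈ X \ S, ∃ A ∈ 𝒜, x ∈ A ∧ A ∩ S = ∅ := by
    intro x hx
    rw [Finset.mem_sdiff] at hx
    have hSx : S ⊆ X \ {x} := by
      intro y hy
      simp only [Finset.mem_sdiff, Finset.mem_singleton]
      exact ⟨hS hy, fun h => hx.2 (h ▸ hy)⟩
    have hcardX1 : k + k' - ℓ ≤ (X \ {x}).card := by
      have : (X \ {x}).card = X.card - 1 := by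
        rw [Finset.card_sdiff_of_subset (by simpa using hx.1), Finset.card_singleton]
      omega
    obtain ⟨U, hSU, hUX1, hUcard⟩ :=
      Finset.exists_subsuperset_card_eq hSx (by omega) hcardX1
    have hUX : U ⊆ X := hUX1.trans (Finset.sdiff_subset)
    have hxU : x ∉ U := fun h => by simpa using (hUX1 h)
    have hxXU : ({x} : Finset ℕ) ⊆ X \ U := by
      simp [Finset.subset_iff, hx.1, hxU]
    have hcardXU : ℓ ≤ (X \ U).card := by
      rw [Finset.card_sdiff_of_subset hUX, hUcard]; omega
    obtain ⟨T, hxT, hTXU, hTcard⟩ :=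
      Finset.exists_subsuperset_card_eq hxXU (by simpa using hℓ) hcardXU
    have hdisj : Disjoint T U := by
      refine Finset.disjoint_left.2 fun a ha hau => ?_
      exact (Finset.mem_sdiff.1 (hTXU ha)).2 hau
    obtain ⟨A, hA, hTA, hUA⟩ := hsep T U (hTXU.trans Finset.sdiff_subset) hUX hdisj
      hTcard (by omega)
    refine ⟨A, hA, hTA (hxT (Finset.mem_singleton_self x)), ?_⟩
    apply Finset.eq_empty_of_forall_notMem
    intro a ha
    rw [Finset.mem_inter] at ha
    have : a ∈ U ∩ A := Finset.mem_inter.2 ⟨hSU ha.2, ha.1⟩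
    simp [hUA] at this
  -- X \ S is a member of the filtered family
  have main : ∀ B : Finset ℕ, B ⊆ X \ S → ∃ A ∈ 𝒜, B ⊆ A ∧ A ∩ S = ∅ := by
    intro B
    induction B using Finset.induction_on with
    | empty => exact fun _ => ⟨∅, hemp, by simp⟩
    | @insert x B hxB ih =>
      intro hB
      obtain ⟨A, hA, hBA, hAS⟩ := ih ((Finset.subset_insert x B).trans hB)
      obtain ⟨A', hA', hxA', hA'S⟩ := key x (hB (Finset.mem_insert_self x B))
      refine ⟨A' ∪ A, hunion _ hA' _ hA, ?_, ?_⟩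
      · intro a ha
        rcases Finset.mem_insert.1 ha with h | h
        · exact Finset.mem_union_left _ (h ▸ hxA')
        · exact Finset.mem_union_right _ (hBA h)
      · rw [Finset.union_inter_distrib_right, hAS, hA'S, Finset.union_empty]
  obtain ⟨A₀, hA₀, hXSA₀, hA₀S⟩ := main (X \ S) (Finset.Subset.refl _)
  have hA₀eq : A₀ = X \ S := by
    apply Finset.Subset.antisymm _ hXSA₀
    intro a ha
    rw [Finset.mem_sdiff]
    refine ⟨hsub _ hA₀ ha, fun h => ?_⟩
    have : a ∈ A₀ ∩ S := Finset.mem_inter.2 ⟨ha, h⟩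
    simp [hA₀S] at this
  constructor
  · refine ⟨?_, ?_, ?_, ?_⟩
    · intro A hA
      rw [Finset.mem_filter] at hA
      intro a ha
      rw [Finset.mem_sdiff]
      refine ⟨hsub _ hA.1 ha, fun h => ?_⟩
      have : a ∈ A ∩ S := Finset.mem_inter.2 ⟨ha, h⟩
      simp [hA.2] at this
    · exact Finset.mem_filter.2 ⟨hemp, by simp⟩
    · exact Finset.mem_filter.2 ⟨hA₀eq ▸ hA₀, hA₀eq ▸ hA₀S⟩
    · intro A₁ h₁ A₂ h₂
      rw [Finset.mem_filter] at h₁ h₂ ⊢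
      exact ⟨hunion _ h₁.1 _ h₂.1,
        by rw [Finset.union_inter_distrib_right, h₁.2, h₂.2, Finset.union_empty]⟩
  · constructor
    · rw [Finset.card_sdiff_of_subset hS, hScard]; omega
    · intro T U hT hU hdisj hTcard hUcard
      have hTX : T ⊆ X := hT.trans Finset.sdiff_subset
      have hUSX : U ∪ S ⊆ X := Finset.union_subset (hU.trans Finset.sdiff_subset) hS
      have hdisjUS : Disjoint U S := Finset.disjoint_left.2 fun a ha has =>
        (Finset.mem_sdiff.1 (hU ha)).2 has
      have hdisj' : Disjoint T (U ∪ S) := by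
        rw [Finset.disjoint_union_right]
        exact ⟨hdisj, Finset.disjoint_left.2 fun a ha has =>
          (Finset.mem_sdiff.1 (hT ha)).2 has⟩
      obtain ⟨A, hA, hTA, hUA⟩ := hsep T (U ∪ S) hTX hUSX hdisj' hTcard
        (by rw [Finset.card_union_of_disjoint hdisjUS, hUcard, hScard]; omega)
      have hAS : A ∩ S = ∅ := by
        apply Finset.eq_empty_of_forall_notMem
        intro a ha
        rw [Finset.mem_inter] at ha
        have : a ∈ (U ∪ S) ∩ A := Finset.mem_inter.2 ⟨Finset.mem_union_right _ ha.2, ha.1⟩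
        simp [hUA] at this
      refine ⟨A, Finset.mem_filter.2 ⟨hA, hAS⟩, hTA, ?_⟩
      apply Finset.eq_empty_of_forall_notMem
      intro a ha
      rw [Finset.mem_inter] at ha
      have : a ∈ (U ∪ S) ∩ A := Finset.mem_inter.2 ⟨Finset.mem_union_left _ ha.1, ha.2⟩
      simp [hUA] at this
end

section
/- Let k, k'', ℓ be natural numbers with k ≥ ℓ ≥ 1 and k'' ≥ 1. Let 𝒜 be a (k+k'')|(ℓ+k'')-separated union-closed family on a finite nonempty set X, and let S ⊆ X with |S| = k''. Then the family 𝒜'' := {A ∖ S : A ∈ 𝒜 and S ⊆ A} ∪ {∅} is a union-closed family on the set X ∖ S (in particular ∅ ∈ 𝒜'', X ∖ S ∈ 𝒜'', and 𝒜'' is closed under unions), and 𝒜'' is k|ℓ-separated. -/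
theorem stmt8 (k k'' ℓ : ℕ) (hℓ : 1 ≤ ℓ) (hk : ℓ ≤ k) (hk'' : 1 ≤ k'')
    (X : Finset ℕ) (hXne : X.Nonempty) (𝒜 : Finset (Finset ℕ))
    (hUC : UnionClosedOn X 𝒜) (hSep : Separated (k + k'') (ℓ + k'') X 𝒜)
    (S : Finset ℕ) (hS : S ⊆ X) (hScard : S.card = k'') :
    UnionClosedOn (X \ S) (((𝒜.filter fun A => S ⊆ A).image fun A => A \ S) ∪ {∅}) ∧
      Separated k ℓ (X \ S) (((𝒜.filter fun A => S ⊆ A).image fun A => A \ S) ∪ {∅}) := by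
  obtain ⟨hsub, hempty, hXmem, hclosed⟩ := hUC
  obtain ⟨hcard, hsep⟩ := hSep
  set 𝒜'' := ((𝒜.filter fun A => S ⊆ A).image fun A => A \ S) ∪ {∅} with h𝒜''
  have hmem : ∀ B, B ∈ 𝒜'' ↔ (∃ A ∈ 𝒜, S ⊆ A ∧ A \ S = B) ∨ B = ∅ := by
    intro B
    simp [h𝒜'', Finset.mem_union, Finset.mem_image, Finset.mem_filter, and_assoc]
    exact Or.comm
  constructor
  · refine ⟨?_, ?_, ?_, ?_⟩
    · intro B hB
      rcases (hmem B).1 hB with ⟨A, hA, _, rfl⟩ | rfl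
      · exact Finset.sdiff_subset_sdiff (hsub A hA) le_rfl
      · exact Finset.empty_subset _
    · exact (hmem ∅).2 (Or.inr rfl)
    · exact (hmem (X \ S)).2 (Or.inl ⟨X, hXmem, hS, rfl⟩)
    · intro B₁ hB₁ B₂ hB₂
      rcases (hmem B₁).1 hB₁ with ⟨A₁, hA₁, hS₁, rfl⟩ | rfl
      · rcases (hmem B₂).1 hB₂ with ⟨A₂, hA₂, hS₂, rfl⟩ | rfl
        · refine (hmem _).2 (Or.inl ⟨A₁ ∪ A₂, hclosed A₁ hA₁ A₂ hA₂,
            hS₁.trans Finset.subset_union_left, ?_⟩)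
          exact Finset.union_sdiff_distrib A₁ A₂ S
        · simpa using hB₁
      · simpa using hB₂
  · constructor
    · have hXS : (X \ S).card = X.card - k'' := by
        rw [Finset.card_sdiff_of_subset hS, hScard]
      omega
    · intro T U hT hU hTU hTcard hUcard
      have hTS : Disjoint T S := by
        refine Finset.disjoint_left.2 fun x hx hxS => ?_
        exact (Finset.mem_sdiff.1 (hT hx)).2 hxS
      have hUS : Disjoint U S := by
        refine Finset.disjoint_left.2 fun x hx hxS => ?_
        exact (Finset.mem_sdiff.1 (hU hx)).2 hxS
      obtain ⟨A, hA, hTSA, hUA⟩ := hsep (T ∪ S) U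
        (Finset.union_subset (hT.trans (Finset.sdiff_subset)) hS)
        (hU.trans (Finset.sdiff_subset))
        (Finset.disjoint_union_left.2 ⟨hTU, hUS.symm⟩)
        (by rw [Finset.card_union_of_disjoint hTS, hTcard, hScard])
        (by omega)
      refine ⟨A \ S, (hmem _).2 (Or.inl ⟨A, hA, Finset.union_subset_iff.1 hTSA |>.2, rfl⟩), ?_, ?_⟩
      · intro x hx
        exact Finset.mem_sdiff.2 ⟨hTSA (Finset.mem_union_left _ hx),
          Finset.disjoint_left.1 hTS hx⟩
      · refine Finset.eq_empty_of_forall_notMem fun x hx => ?_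
        rcases Finset.mem_inter.1 hx with ⟨hxU, hxA⟩
        have : x ∈ U ∩ A := Finset.mem_inter.2 ⟨hxU, (Finset.mem_sdiff.1 hxA).1⟩
        rw [hUA] at this
        exact absurd this (Finset.notMem_empty x)
end

section
/- Let k, k' ≥ 1 be natural numbers. If 1 − 2^{-k} is (k|1)-admissible and 1 − 2^{-k'} is (k'|1)-admissible, then 1 − 2^{-(k+k')} is ((k+k')|1)-admissible. -/
lemma sup_mem_of_unionClosed (ℬ : Finset (Finset ℕ)) (hbot : ∅ ∈ ℬ)
    (hcl : ∀ A ∈ ℬ, ∀ B ∈ ℬ, A ∪ B ∈ ℬ) : ℬ.sup id ∈ ℬ := by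
  have key : ∀ 𝒞 : Finset (Finset ℕ), 𝒞 ⊆ ℬ → 𝒞.sup id ∈ ℬ := by
    intro 𝒞
    induction 𝒞 using Finset.induction_on with
    | empty => intro _; simpa using hbot
    | insert _ _ hA ih =>
      intro hsub
      rw [Finset.sup_insert]
      exact hcl _ (hsub (Finset.mem_insert_self _ _)) _
        (ih fun x hx => hsub (Finset.mem_insert_of_mem hx))
  exact key ℬ le_rfl


theorem stmt9 (k k' : ℕ) (hk : 1 ≤ k) (hk' : 1 ≤ k')
    (h : Admissible k 1 (1 - (2 : ℝ) ^ (-(k : ℤ))))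
    (h' : Admissible k' 1 (1 - (2 : ℝ) ^ (-(k' : ℤ)))) :
    Admissible (k + k') 1 (1 - (2 : ℝ) ^ (-((k + k' : ℕ) : ℤ))) := by
  classical
  obtain ⟨-, H⟩ := h
  obtain ⟨-, H'⟩ := h'
  have h2pos : ∀ n : ℕ, (0:ℝ) < 2 ^ (-(n:ℤ)) := fun n => zpow_pos (by norm_num) _
  have h2le : ∀ n : ℕ, (2:ℝ) ^ (-(n:ℤ)) ≤ 1 := fun n =>
    zpow_le_one_of_nonpos₀ (by norm_num) (by omega)
  refine ⟨by linarith [h2le (k + k')], ?_⟩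
  intro X 𝒜 hXne hUC hSep
  obtain ⟨hsubX, hemp, hXmem, hun⟩ := hUC
  obtain ⟨hcard, hsep⟩ := hSep
  -- Step 1: 𝒜 is (k|1)-separated on X
  have sep1 : Separated k 1 X 𝒜 := by
    refine ⟨le_trans (Nat.le_add_right _ _) hcard, ?_⟩
    intro T U hT hU hTU hTc hUc
    obtain ⟨U', hUU', hU'X, hU'c⟩ := Finset.exists_subsuperset_card_eq
      (t := X \ T) (n := k + k' - 1)
      (fun x hx => Finset.mem_sdiff.2 ⟨hU hx, fun hxT =>
        Finset.disjoint_left.1 hTU hxT hx⟩)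
      (by omega)
      (by rw [Finset.card_sdiff_of_subset hT, hTc]; omega)
    obtain ⟨A, hA, hTA, hUA⟩ := hsep T U' hT (hU'X.trans (Finset.sdiff_subset))
      (Finset.disjoint_left.2 fun x hxT hxU' => (Finset.mem_sdiff.1 (hU'X hxU')).2 hxT)
      hTc (by omega)
    exact ⟨A, hA, hTA, Finset.eq_empty_of_forall_notMem fun x hx => by
      have := Finset.mem_inter.1 hx
      have : x ∈ U' ∩ A := Finset.mem_inter.2 ⟨hUU' this.1, this.2⟩
      simp [hUA] at this⟩
  obtain ⟨S₁, hS₁X, hS₁c, hG₁⟩ := H X 𝒜 hXne ⟨hsubX, hemp, hXmem, hun⟩ sep1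
  -- The subfamily avoiding S₁
  set 𝒜₀ : Finset (Finset ℕ) := 𝒜.filter (fun A => A ∩ S₁ = ∅) with h𝒜₀
  set X₀ : Finset ℕ := X \ S₁ with hX₀
  have hX₀card : X₀.card = X.card - k := by rw [hX₀, Finset.card_sdiff_of_subset hS₁X, hS₁c]
  -- every x ∈ X₀ is covered by some member of 𝒜₀
  have hcover : ∀ x ∈ X₀, ∃ A ∈ 𝒜₀, x ∈ A := by
    intro x hx
    have hxX : x ∈ X := (Finset.mem_sdiff.1 hx).1
    have hxS₁ : x ∉ S₁ := (Finset.mem_sdiff.1 hx).2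
    obtain ⟨U', hSU', hU'X, hU'c⟩ := Finset.exists_subsuperset_card_eq
      (t := X \ {x}) (n := k + k' - 1)
      (fun y hy => Finset.mem_sdiff.2 ⟨hS₁X hy, fun hyx =>
        hxS₁ (by rwa [Finset.mem_singleton.1 hyx] at hy)⟩)
      (by omega) (by rw [Finset.card_sdiff_of_subset (Finset.singleton_subset_iff.2 hxX)]; simp; omega)
    obtain ⟨A, hA, hTA, hUA⟩ := hsep {x} U' (Finset.singleton_subset_iff.2 hxX)
      (hU'X.trans Finset.sdiff_subset)
      (Finset.disjoint_left.2 fun y hyT hyU' =>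
        (Finset.mem_sdiff.1 (hU'X hyU')).2 hyT) (by simp) (by omega)
    refine ⟨A, Finset.mem_filter.2 ⟨hA, ?_⟩, hTA (Finset.mem_singleton_self x)⟩
    apply Finset.eq_empty_of_forall_notMem
    intro y hy
    have hy' := Finset.mem_inter.1 hy
    have : y ∈ U' ∩ A := Finset.mem_inter.2 ⟨hSU' hy'.2, hy'.1⟩
    simp [hUA] at this
  -- 𝒜₀ is union-closed on X₀
  have hempty0 : ∅ ∈ 𝒜₀ := Finset.mem_filter.2 ⟨hemp, by simp⟩
  have hcl₀ : ∀ A ∈ 𝒜₀, ∀ B ∈ 𝒜₀, A ∪ B ∈ 𝒜₀ := by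
    intro A hA B hB
    rw [Finset.mem_filter] at hA hB ⊢
    exact ⟨hun _ hA.1 _ hB.1, by rw [Finset.union_inter_distrib_right, hA.2, hB.2]; simp⟩
  have hsub₀ : ∀ A ∈ 𝒜₀, A ⊆ X₀ := by
    intro A hA x hx
    rw [Finset.mem_filter] at hA
    refine Finset.mem_sdiff.2 ⟨hsubX A hA.1 hx, fun hxS => ?_⟩
    have : x ∈ A ∩ S₁ := Finset.mem_inter.2 ⟨hx, hxS⟩
    simp [hA.2] at this
  have hsupmem : 𝒜₀.sup id ∈ 𝒜₀ := sup_mem_of_unionClosed 𝒜₀ hempty0 hcl₀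
  have hsupeq : 𝒜₀.sup id = X₀ := by
    apply Finset.Subset.antisymm
    · exact Finset.sup_le fun A hA => hsub₀ A hA
    · intro x hx
      obtain ⟨A, hA, hxA⟩ := hcover x hx
      exact (Finset.le_sup (f := id) hA) hxA
  have hX₀mem : X₀ ∈ 𝒜₀ := hsupeq ▸ hsupmem
  have hX₀ne : X₀.Nonempty := by
    rw [← Finset.card_pos, hX₀card]; omega
  -- 𝒜₀ is (k'|1)-separated on X₀
  have sep₀ : Separated k' 1 X₀ 𝒜₀ := by
    refine ⟨by omega, ?_⟩
    intro T U hT hU hTU hTc hUc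
    have hTS₁ : Disjoint T S₁ :=
      Finset.disjoint_left.2 fun x hxT hxS => (Finset.mem_sdiff.1 (hT hxT)).2 hxS
    have hUS₁ : Disjoint U S₁ :=
      Finset.disjoint_left.2 fun x hxU hxS => (Finset.mem_sdiff.1 (hU hxU)).2 hxS
    obtain ⟨A, hA, hTA, hUA⟩ := hsep T (U ∪ S₁) (hT.trans Finset.sdiff_subset)
      (Finset.union_subset (hU.trans Finset.sdiff_subset) hS₁X)
      (Finset.disjoint_union_right.2 ⟨hTU, hTS₁⟩) hTc
      (by rw [Finset.card_union_of_disjoint hUS₁, hS₁c]; omega)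
    refine ⟨A, Finset.mem_filter.2 ⟨hA, ?_⟩, hTA, ?_⟩
    · apply Finset.eq_empty_of_forall_notMem
      intro y hy
      have hy' := Finset.mem_inter.1 hy
      have : y ∈ (U ∪ S₁) ∩ A := Finset.mem_inter.2 ⟨Finset.mem_union_right _ hy'.2, hy'.1⟩
      simp [hUA] at this
    · apply Finset.eq_empty_of_forall_notMem
      intro y hy
      have hy' := Finset.mem_inter.1 hy
      have : y ∈ (U ∪ S₁) ∩ A := Finset.mem_inter.2 ⟨Finset.mem_union_left _ hy'.1, hy'.2⟩
      simp [hUA] at this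
  obtain ⟨S₂, hS₂X₀, hS₂c, hG₂⟩ := H' X₀ 𝒜₀ hX₀ne ⟨hsub₀, hempty0, hX₀mem, hcl₀⟩ sep₀
  -- assemble
  refine ⟨S₁ ∪ S₂, Finset.union_subset hS₁X (hS₂X₀.trans Finset.sdiff_subset), ?_, ?_⟩
  · rw [Finset.card_union_of_disjoint, hS₁c, hS₂c]
    exact Finset.disjoint_left.2 fun x hxS₁ hxS₂ =>
      (Finset.mem_sdiff.1 (hS₂X₀ hxS₂)).2 hxS₁
  -- counting
  have c1 : (𝒜.filter fun A => 1 ≤ (A ∩ S₁).card).card + 𝒜₀.card = 𝒜.card := by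
    rw [h𝒜₀]
    have : (𝒜.filter fun A => A ∩ S₁ = ∅) = 𝒜.filter fun A => ¬ (1 ≤ (A ∩ S₁).card) := by
      apply Finset.filter_congr
      intro A _
      simp [Nat.lt_one_iff, Finset.card_eq_zero]
    rw [this]
    exact Finset.card_filter_add_card_filter_not _
  set B : Finset (Finset ℕ) := 𝒜₀.filter (fun A => A ∩ S₂ = ∅) with hB
  have c2 : (𝒜₀.filter fun A => 1 ≤ (A ∩ S₂).card).card + B.card = 𝒜₀.card := by
    rw [hB]
    have : (𝒜₀.filter fun A => A ∩ S₂ = ∅) = 𝒜₀.filter fun A => ¬ (1 ≤ (A ∩ S₂).card) := by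
      apply Finset.filter_congr
      intro A _
      simp [Nat.lt_one_iff, Finset.card_eq_zero]
    rw [this]
    exact Finset.card_filter_add_card_filter_not _
  have c3 : (𝒜.filter fun A => 1 ≤ (A ∩ (S₁ ∪ S₂)).card).card + B.card = 𝒜.card := by
    have : B = 𝒜.filter fun A => ¬ (1 ≤ (A ∩ (S₁ ∪ S₂)).card) := by
      rw [hB, h𝒜₀, Finset.filter_filter]
      apply Finset.filter_congr
      intro A _
      simp only [Nat.lt_one_iff, Finset.card_eq_zero, not_le,
        Finset.inter_union_distrib_left, Finset.union_eq_empty]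
    rw [this]
    exact Finset.card_filter_add_card_filter_not _
  have e1 : ((𝒜.filter fun A => 1 ≤ (A ∩ S₁).card).card : ℝ) + 𝒜₀.card = 𝒜.card := by
    exact_mod_cast congrArg (Nat.cast : ℕ → ℝ) c1
  have e2 : ((𝒜₀.filter fun A => 1 ≤ (A ∩ S₂).card).card : ℝ) + B.card = 𝒜₀.card := by
    exact_mod_cast congrArg (Nat.cast : ℕ → ℝ) c2
  have e3 : ((𝒜.filter fun A => 1 ≤ (A ∩ (S₁ ∪ S₂)).card).card : ℝ) + B.card = 𝒜.card := by
    exact_mod_cast congrArg (Nat.cast : ℕ → ℝ) c3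
  have hA₀le : (𝒜₀.card : ℝ) ≤ 2 ^ (-(k:ℤ)) * 𝒜.card := by linarith
  have hBle : (B.card : ℝ) ≤ 2 ^ (-(k':ℤ)) * 𝒜₀.card := by linarith
  have hBle2 : (B.card : ℝ) ≤ 2 ^ (-(k':ℤ)) * (2 ^ (-(k:ℤ)) * 𝒜.card) :=
    hBle.trans (by
      apply mul_le_mul_of_nonneg_left hA₀le (le_of_lt (h2pos k')))
  have hzz : (2:ℝ) ^ (-(k':ℤ)) * 2 ^ (-(k:ℤ)) = 2 ^ (-((k + k' : ℕ) : ℤ)) := by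
    rw [← zpow_add₀ (by norm_num : (2:ℝ) ≠ 0)]
    congr 1
    push_cast
    ring
  have : (B.card : ℝ) ≤ 2 ^ (-((k + k' : ℕ) : ℤ)) * 𝒜.card := by
    rw [← hzz, mul_assoc]; exact hBle2
  linarith
end

section
/- Assume the Frankl conjecture holds, i.e., for every union-closed family 𝒜 on a finite nonempty set X there exists x ∈ X belonging to at least |𝒜|/2 members of 𝒜. Then for every natural number k ≥ 1, the number 1 − 2^{-k} is (k|1)-admissible: for every k|1-separated union-closed family 𝒜 on a finite nonempty set X there exists S ⊆ X with |S| = k such that at least (1 − 2^{-k})·|𝒜| members A of 𝒜 satisfy A ∩ S ≠ ∅. -/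
/-- A `k|1`-separated union-closed family has at least `2^k` members. -/
lemma card_ge_of_separated {k : ℕ} {X : Finset ℕ} {𝒜 : Finset (Finset ℕ)}
    (hk : 1 ≤ k) (hUC : UnionClosedOn X 𝒜) (hSep : Separated k 1 X 𝒜) :
    2 ^ k ≤ 𝒜.card := by
  classical
  obtain ⟨K, hKX, hK⟩ := Finset.exists_subset_card_eq hSep.1
  have hAx : ∀ x ∈ K, ∃ A ∈ 𝒜, A ∩ K = {x} := by
    intro x hx
    obtain ⟨A, hA, hTA, hUA⟩ := hSep.2 {x} (K.erase x)
      (Finset.singleton_subset_iff.2 (hKX hx))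
      ((Finset.erase_subset x K).trans hKX)
      (by simp)
      (Finset.card_singleton x)
      (by rw [Finset.card_erase_of_mem hx, hK])
    refine ⟨A, hA, ?_⟩
    ext a
    simp only [Finset.mem_inter, Finset.mem_singleton]
    constructor
    · rintro ⟨haA, haK⟩
      by_contra hne
      have : a ∈ K.erase x ∩ A := Finset.mem_inter.2 ⟨Finset.mem_erase.2 ⟨hne, haK⟩, haA⟩
      simp [hUA] at this
    · intro h
      rw [h]
      exact ⟨hTA (Finset.mem_singleton_self x), hx⟩
  choose! g hg1 hg2 using hAx
  have hW : ∀ W ∈ K.powerset, ∃ A ∈ 𝒜, A ∩ K = W := by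
    intro W hWp
    rw [Finset.mem_powerset] at hWp
    rcases W.eq_empty_or_nonempty with rfl | hne
    · exact ⟨∅, hUC.2.1, by simp⟩
    · refine ⟨W.sup' hne g, ?_, ?_⟩
      · exact Finset.sup'_mem {A | A ∈ 𝒜} (fun a ha b hb => hUC.2.2.2 a ha b hb) W hne g
          (fun i hi => hg1 i (hWp hi))
      · ext a
        simp only [Finset.mem_inter, Finset.mem_sup']
        constructor
        · rintro ⟨⟨x, hxW, hax⟩, haK⟩
          have : a ∈ g x ∩ K := Finset.mem_inter.2 ⟨hax, haK⟩
          rw [hg2 x (hWp hxW)] at this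
          rw [Finset.mem_singleton] at this
          exact this ▸ hxW
        · intro haW
          have haK := hWp haW
          have : a ∈ g a ∩ K := by rw [hg2 a haK]; exact Finset.mem_singleton_self a
          exact ⟨⟨a, haW, (Finset.mem_inter.1 this).1⟩, haK⟩
  choose! f hf1 hf2 using hW
  have hinj : Set.InjOn f ↑K.powerset := by
    intro W₁ h₁ W₂ h₂ hfe
    rw [← hf2 W₁ h₁, ← hf2 W₂ h₂, hfe]
  calc 2 ^ k = K.powerset.card := by rw [Finset.card_powerset, hK]
    _ ≤ 𝒜.card := Finset.card_le_card_of_injOn f (fun W hWp => hf1 W hWp) hinj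

theorem stmt10
    (hFrankl : ∀ (X : Finset ℕ) (𝒜 : Finset (Finset ℕ)), X.Nonempty → UnionClosedOn X 𝒜 →
      ∃ x ∈ X, (𝒜.card : ℝ) / 2 ≤ (((𝒜.filter fun A => x ∈ A)).card : ℝ)) :
    ∀ k : ℕ, 1 ≤ k → Admissible k 1 (1 - (2 : ℝ) ^ (-(k : ℤ))) := by
  classical
  intro k hk
  have h2k : (2 : ℝ) ^ (-(k : ℤ)) = ((2 : ℝ) ^ k)⁻¹ := by
    rw [zpow_neg, zpow_natCast]
  have h2kpos : (0 : ℝ) < 2 ^ k := by positivity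
  constructor
  · rw [h2k]
    have h1 : (1 : ℝ) ≤ 2 ^ k := one_le_pow₀ (by norm_num)
    have := inv_le_one_of_one_le₀ h1
    linarith
  intro X 𝒜 hX hUC hSep
  have hcard : (2 : ℝ) ^ k ≤ 𝒜.card := by
    have := card_ge_of_separated hk hUC hSep
    calc (2 : ℝ) ^ k = ((2 ^ k : ℕ) : ℝ) := by push_cast; ring
      _ ≤ 𝒜.card := by exact_mod_cast this
  -- main induction
  have main : ∀ i, i ≤ k → ∃ S, S ⊆ X ∧ S.card = i ∧
      (((𝒜.filter fun A => A ∩ S = ∅).card : ℝ)) ≤ (𝒜.card : ℝ) / 2 ^ i := by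
    intro i
    induction i with
    | zero =>
      intro _
      refine ⟨∅, Finset.empty_subset X, rfl, ?_⟩
      simp only [Finset.inter_empty]
      simp
    | succ i ih =>
      intro hik
      obtain ⟨S, hSX, hScard, hSbound⟩ := ih (Nat.le_of_succ_le hik)
      set ℬ := 𝒜.filter fun A => A ∩ S = ∅ with hℬ
      have hℬsub : ∀ A ∈ ℬ, A ∈ 𝒜 ∧ A ∩ S = ∅ := fun A hA => Finset.mem_filter.1 hA
      set Y := ℬ.sup id with hY
      rcases Y.eq_empty_or_nonempty with hYe | hYne
      · -- degenerate case: ℬ ⊆ {∅}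
        have hBsingle : ℬ ⊆ {∅} := by
          intro A hA
          have : A ⊆ Y := Finset.le_sup (f := id) hA
          rw [hYe] at this
          simp [Finset.subset_empty.1 this]
        obtain ⟨x, hxX, hxS⟩ : ∃ x ∈ X, x ∉ S := by
          by_contra hcon
          push_neg at hcon
          have : X ⊆ S := fun a ha => hcon a ha
          have h1 := Finset.card_le_card this
          have h2 := hSep.1
          omega
        refine ⟨insert x S, Finset.insert_subset hxX hSX, by rw [Finset.card_insert_of_notMem hxS, hScard], ?_⟩
        have hsub : (𝒜.filter fun A => A ∩ insert x S = ∅) ⊆ ℬ := by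
          intro A hA
          rw [Finset.mem_filter] at hA ⊢
          refine ⟨hA.1, ?_⟩
          have := hA.2
          rw [Finset.inter_insert_of_notMem] at this
          · exact this
          · intro hxA
            have : x ∈ A ∩ insert x S := Finset.mem_inter.2 ⟨hxA, Finset.mem_insert_self x S⟩
            rw [hA.2] at this
            simp at this
        have h1 : ((𝒜.filter fun A => A ∩ insert x S = ∅).card : ℝ) ≤ 1 := by
          have := Finset.card_le_card (hsub.trans hBsingle)
          simp only [Finset.card_singleton] at this
          exact_mod_cast this
        have h2 : (1 : ℝ) ≤ (𝒜.card : ℝ) / 2 ^ (i + 1) := by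
          rw [le_div_iff₀ (by positivity)]
          calc (1 : ℝ) * 2 ^ (i + 1) = 2 ^ (i + 1) := by ring
            _ ≤ 2 ^ k := by
                apply pow_le_pow_right₀ (by norm_num) hik
            _ ≤ 𝒜.card := hcard
        linarith
      · -- Frankl case
        have hclose : ∀ A ∈ ℬ, ∀ B ∈ ℬ, A ∪ B ∈ ℬ := by
          intro A hA B hB
          obtain ⟨hA1, hA2⟩ := hℬsub A hA
          obtain ⟨hB1, hB2⟩ := hℬsub B hB
          rw [hℬ, Finset.mem_filter]
          exact ⟨hUC.2.2.2 A hA1 B hB1,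
            by rw [Finset.union_inter_distrib_right, hA2, hB2, Finset.union_empty]⟩
        have hYX : Y ⊆ X := by
          intro a ha
          rw [hY, Finset.mem_sup] at ha
          obtain ⟨A, hA, haA⟩ := ha
          exact hUC.1 A (hℬsub A hA).1 haA
        have hYmem : Y ∈ ℬ := by
          apply Finset.sup_mem {A | A ∈ ℬ}
          · exact Finset.mem_filter.2 ⟨hUC.2.1, by simp⟩
          · intro A hA B hB
            simpa [Finset.sup_eq_union] using hclose A hA B hB
          · exact fun A hA => hA
        have hUCB : UnionClosedOn Y ℬ :=
          ⟨fun A hA => Finset.le_sup (f := id) hA,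
            Finset.mem_filter.2 ⟨hUC.2.1, by simp⟩, hYmem, hclose⟩
        obtain ⟨x, hxY, hxhalf⟩ := hFrankl Y ℬ hYne hUCB
        have hxX : x ∈ X := hYX hxY
        have hxS : x ∉ S := by
          rw [hY, Finset.mem_sup] at hxY
          obtain ⟨A, hA, hxA⟩ := hxY
          intro hxS
          have : x ∈ A ∩ S := Finset.mem_inter.2 ⟨hxA, hxS⟩
          rw [(hℬsub A hA).2] at this
          simp at this
        refine ⟨insert x S, Finset.insert_subset hxX hSX, by rw [Finset.card_insert_of_notMem hxS, hScard], ?_⟩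
        have hfe : (𝒜.filter fun A => A ∩ insert x S = ∅) = ℬ.filter fun A => x ∉ A := by
          rw [hℬ, Finset.filter_filter]
          apply Finset.filter_congr
          intro A _
          constructor
          · intro h
            constructor
            · rw [← Finset.subset_empty, ← h]
              exact Finset.inter_subset_inter (Finset.Subset.refl A) (Finset.subset_insert x S)
            · intro hxA
              have : x ∈ A ∩ insert x S := Finset.mem_inter.2 ⟨hxA, Finset.mem_insert_self x S⟩
              rw [h] at this
              simp at this
          · rintro ⟨h1, h2⟩
            rw [Finset.inter_insert_of_notMem h2, h1]
        have hsplit : (ℬ.filter fun A => x ∈ A).card + (ℬ.filter fun A => x ∉ A).card = ℬ.card :=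
          Finset.card_filter_add_card_filter_not _
        have hb2 : ((ℬ.filter fun A => x ∉ A).card : ℝ) ≤ (ℬ.card : ℝ) / 2 := by
          have : ((ℬ.filter fun A => x ∈ A).card : ℝ) + ((ℬ.filter fun A => x ∉ A).card : ℝ)
              = (ℬ.card : ℝ) := by exact_mod_cast hsplit
          linarith
        rw [hfe]
        calc ((ℬ.filter fun A => x ∉ A).card : ℝ) ≤ (ℬ.card : ℝ) / 2 := hb2
          _ ≤ ((𝒜.card : ℝ) / 2 ^ i) / 2 := by linarith
          _ = (𝒜.card : ℝ) / 2 ^ (i + 1) := by ring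
  obtain ⟨S, hSX, hScard, hSbound⟩ := main k le_rfl
  refine ⟨S, hSX, hScard, ?_⟩
  have hcompl : (𝒜.filter fun A => 1 ≤ (A ∩ S).card) = 𝒜.filter fun A => ¬(A ∩ S = ∅) := by
    apply Finset.filter_congr
    intro A _
    simp [Finset.card_pos, Finset.nonempty_iff_ne_empty]
  have hsplit : (𝒜.filter fun A => A ∩ S = ∅).card + (𝒜.filter fun A => ¬(A ∩ S = ∅)).card = 𝒜.card :=
    Finset.card_filter_add_card_filter_not _
  have hsplitR : ((𝒜.filter fun A => A ∩ S = ∅).card : ℝ) + ((𝒜.filter fun A => ¬(A ∩ S = ∅)).card : ℝ)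
      = (𝒜.card : ℝ) := by exact_mod_cast hsplit
  rw [hcompl]
  have : (1 - (2 : ℝ) ^ (-(k : ℤ))) * (𝒜.card : ℝ) = (𝒜.card : ℝ) - (𝒜.card : ℝ) / 2 ^ k := by
    rw [h2k]; field_simp
  rw [this]
  linarith
end

section
/- Let k, k' ≥ 1 be natural numbers. If 2^{-k} is (k|k)-admissible and 2^{-k'} is (k'|k')-admissible, then 2^{-(k+k')} is ((k+k')|(k+k'))-admissible. -/
lemma filter_card_eq (S : Finset ℕ) (𝒜 : Finset (Finset ℕ)) (k : ℕ) (hS : S.card = k) :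
    𝒜.filter (fun A => k ≤ (A ∩ S).card) = 𝒜.filter (fun A => S ⊆ A) := by
  apply Finset.filter_congr
  intro A _
  constructor
  · intro hle
    have h1 : A ∩ S = S := Finset.eq_of_subset_of_card_le Finset.inter_subset_right
      (by omega)
    intro x hx
    rw [← h1] at hx
    exact (Finset.mem_inter.mp hx).1
  · intro hSA
    have : A ∩ S = S := Finset.inter_eq_right.mpr hSA
    rw [this, hS]

theorem stmt11 (k k' : ℕ) (hk : 1 ≤ k) (hk' : 1 ≤ k')
    (h : Admissible k k ((2 : ℝ) ^ (-(k : ℤ))))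
    (h' : Admissible k' k' ((2 : ℝ) ^ (-(k' : ℤ)))) :
    Admissible (k + k') (k + k') ((2 : ℝ) ^ (-((k + k' : ℕ) : ℤ))) := by
  obtain ⟨_, hmain⟩ := h
  obtain ⟨_, hmain'⟩ := h'
  refine ⟨by positivity, ?_⟩
  intro X 𝒜 hX hUC hsep
  obtain ⟨hcard, _⟩ := hsep
  obtain ⟨hsub, hemp, hXmem, hunion⟩ := hUC
  -- Step 1: apply h
  have hsepk : Separated k k X 𝒜 := by
    refine ⟨le_trans (Nat.le_add_right k k') hcard, fun T U hT hU hd hTc hUc => ⟨X, hXmem, hT, ?_⟩⟩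
    have : U = ∅ := Finset.card_eq_zero.mp (by omega)
    simp [this]
  obtain ⟨S, hSX, hScard, hScount⟩ := hmain X 𝒜 hX ⟨hsub, hemp, hXmem, hunion⟩ hsepk
  rw [filter_card_eq S 𝒜 k hScard] at hScount
  set 𝒜S := 𝒜.filter (fun A => S ⊆ A) with h𝒜S
  set Y := X \ S with hY
  set ℬ := insert (∅ : Finset ℕ) (𝒜S.image (· \ S)) with hℬ
  have hScardY : Y.card = X.card - k := by rw [hY, Finset.card_sdiff_of_subset hSX, hScard]
  have hYcard : k' ≤ Y.card := by omega
  have hYne : Y.Nonempty := Finset.card_pos.mp (by omega)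
  have hmemB : ∀ B ∈ ℬ, B = ∅ ∨ ∃ A ∈ 𝒜, S ⊆ A ∧ B = A \ S := by
    intro B hB
    rcases Finset.mem_insert.mp hB with h1 | h1
    · exact Or.inl h1
    · obtain ⟨A, hA, hAB⟩ := Finset.mem_image.mp h1
      rw [h𝒜S, Finset.mem_filter] at hA
      exact Or.inr ⟨A, hA.1, hA.2, hAB.symm⟩
  have hdiffmem : ∀ A ∈ 𝒜, S ⊆ A → A \ S ∈ ℬ := by
    intro A hA hSA
    exact Finset.mem_insert_of_mem (Finset.mem_image_of_mem _
      (Finset.mem_filter.mpr ⟨hA, hSA⟩))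
  have hUCB : UnionClosedOn Y ℬ := by
    refine ⟨?_, Finset.mem_insert_self _ _, hdiffmem X hXmem hSX, ?_⟩
    · intro B hB
      rcases hmemB B hB with h1 | ⟨A, hA, hSA, rfl⟩
      · simp [h1]
      · exact Finset.sdiff_subset_sdiff (hsub A hA) le_rfl
    · intro B₁ hB₁ B₂ hB₂
      rcases hmemB B₁ hB₁ with h1 | ⟨A₁, hA₁, hSA₁, rfl⟩
      · simpa [h1] using hB₂
      rcases hmemB B₂ hB₂ with h2 | ⟨A₂, hA₂, hSA₂, rfl⟩
      · simpa [h2] using hB₁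
      rw [← Finset.union_sdiff_distrib]
      exact hdiffmem _ (hunion A₁ hA₁ A₂ hA₂) (hSA₁.trans Finset.subset_union_left)
  have hsepB : Separated k' k' Y ℬ := by
    refine ⟨hYcard, fun T U hT hU hd hTc hUc => ⟨Y, hUCB.2.2.1, hT, ?_⟩⟩
    have : U = ∅ := Finset.card_eq_zero.mp (by omega)
    simp [this]
  obtain ⟨S', hS'Y, hS'card, hS'count⟩ := hmain' Y ℬ hYne hUCB hsepB
  rw [filter_card_eq S' ℬ k' hS'card] at hS'count
  -- basic facts
  have hS'X : S' ⊆ X := hS'Y.trans Finset.sdiff_subset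
  have hdisjSS' : Disjoint S S' := by
    rw [Finset.disjoint_right]
    intro x hx
    exact (Finset.mem_sdiff.mp (hS'Y hx)).2
  have hS'ne : S'.Nonempty := Finset.card_pos.mp (by omega)
  -- card inequality 1 : 𝒜S.card ≤ ℬ.card
  have hinj1 : (𝒜S.card : ℝ) ≤ (ℬ.card : ℝ) := by
    have : 𝒜S.card = (𝒜S.image (· \ S)).card := by
      rw [Finset.card_image_of_injOn]
      intro A hA A' hA' hEq
      simp only [Finset.mem_coe, h𝒜S, Finset.mem_filter] at hA hA'
      have := congrArg (· ∪ S) hEq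
      simpa [Finset.sdiff_union_of_subset hA.2, Finset.sdiff_union_of_subset hA'.2] using this
    rw [this]
    exact_mod_cast Finset.card_le_card (Finset.subset_insert _ _)
  -- card inequality 2 : filter on ℬ ≤ filter on 𝒜
  have hinj2 : ((ℬ.filter (fun B => S' ⊆ B)).card : ℝ) ≤
      ((𝒜.filter (fun A => S ∪ S' ⊆ A)).card : ℝ) := by
    have := Finset.card_le_card_of_injOn (f := (· ∪ S))
      (s := ℬ.filter (fun B => S' ⊆ B)) (t := 𝒜.filter (fun A => S ∪ S' ⊆ A)) ?_ ?_
    · exact_mod_cast this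
    · intro B hB
      obtain ⟨hBℬ, hS'B⟩ := Finset.mem_filter.mp hB
      rcases hmemB B hBℬ with h1 | ⟨A, hA, hSA, rfl⟩
      · exact absurd (h1 ▸ hS'B) (by simpa using hS'ne.ne_empty ∘ Finset.subset_empty.mp)
      · show A \ S ∪ S ∈ _
        rw [Finset.sdiff_union_of_subset hSA]
        refine Finset.mem_filter.mpr ⟨hA, Finset.union_subset hSA (hS'B.trans Finset.sdiff_subset)⟩
    · intro B hB B' hB' hEq
      obtain ⟨hBℬ, _⟩ := Finset.mem_filter.mp hB
      obtain ⟨hB'ℬ, _⟩ := Finset.mem_filter.mp hB'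
      have hBY : B ⊆ Y := hUCB.1 B hBℬ
      have hB'Y : B' ⊆ Y := hUCB.1 B' hB'ℬ
      have hd1 : Disjoint B S := Finset.disjoint_left.mpr fun x hx =>
        (Finset.mem_sdiff.mp (hBY hx)).2
      have hd2 : Disjoint B' S := Finset.disjoint_left.mpr fun x hx =>
        (Finset.mem_sdiff.mp (hB'Y hx)).2
      have := congrArg (· \ S) hEq
      simpa [Finset.union_sdiff_cancel_right hd1, Finset.union_sdiff_cancel_right hd2] using this
  -- final subset inequality
  have hfin : ((𝒜.filter (fun A => S ∪ S' ⊆ A)).card : ℝ) ≤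
      ((𝒜.filter (fun A => k + k' ≤ (A ∩ (S ∪ S')).card)).card : ℝ) := by
    have := Finset.card_le_card (Finset.monotone_filter_right 𝒜
      (p := fun A => S ∪ S' ⊆ A) (q := fun A => k + k' ≤ (A ∩ (S ∪ S')).card) ?_)
    · exact_mod_cast this
    · intro A _ hA
      show k + k' ≤ (A ∩ (S ∪ S')).card
      rw [Finset.inter_eq_right.mpr hA, Finset.card_union_of_disjoint hdisjSS', hScard, hS'card]
  refine ⟨S ∪ S', Finset.union_subset hSX hS'X, ?_, ?_⟩
  · rw [Finset.card_union_of_disjoint hdisjSS', hScard, hS'card]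
  · have hpw : (2 : ℝ) ^ (-((k + k' : ℕ) : ℤ)) = (2:ℝ) ^ (-(k':ℤ)) * (2:ℝ) ^ (-(k:ℤ)) := by
      rw [← zpow_add₀ (by norm_num : (2:ℝ) ≠ 0)]
      push_cast
      ring_nf
    calc (2 : ℝ) ^ (-((k + k' : ℕ) : ℤ)) * (𝒜.card : ℝ)
        = (2:ℝ) ^ (-(k':ℤ)) * ((2:ℝ) ^ (-(k:ℤ)) * (𝒜.card : ℝ)) := by rw [hpw]; ring
      _ ≤ (2:ℝ) ^ (-(k':ℤ)) * (𝒜S.card : ℝ) := by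
          apply mul_le_mul_of_nonneg_left hScount (by positivity)
      _ ≤ (2:ℝ) ^ (-(k':ℤ)) * (ℬ.card : ℝ) := by
          apply mul_le_mul_of_nonneg_left hinj1 (by positivity)
      _ ≤ ((ℬ.filter (fun B => S' ⊆ B)).card : ℝ) := hS'count
      _ ≤ ((𝒜.filter (fun A => S ∪ S' ⊆ A)).card : ℝ) := hinj2
      _ ≤ _ := hfin
end

section
/- Assume the Frankl conjecture holds, i.e., for every union-closed family 𝒜 on a finite nonempty set X there exists x ∈ X belonging to at least |𝒜|/2 members of 𝒜. Then for every natural number k ≥ 1, the number 2^{-k} is (k|k)-admissible: for every union-closed family 𝒜 on a finite nonempty set X with |X| ≥ k there exists S ⊆ X with |S| = k such that S is contained in at least 2^{-k}·|𝒜| members of 𝒜. -/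
lemma step_lemma
    (hFrankl : ∀ (X : Finset ℕ) (𝒜 : Finset (Finset ℕ)), X.Nonempty →
      ((∀ A ∈ 𝒜, A ⊆ X) ∧ ∅ ∈ 𝒜 ∧ X ∈ 𝒜 ∧ ∀ A₁ ∈ 𝒜, ∀ A₂ ∈ 𝒜, A₁ ∪ A₂ ∈ 𝒜) →
      ∃ x ∈ X, (𝒜.card : ℝ) / 2 ≤ (((𝒜.filter fun A => x ∈ A)).card : ℝ))
    (X : Finset ℕ) (𝒜 : Finset (Finset ℕ))
    (hUC : (∀ A ∈ 𝒜, A ⊆ X) ∧ ∅ ∈ 𝒜 ∧ X ∈ 𝒜 ∧ ∀ A₁ ∈ 𝒜, ∀ A₂ ∈ 𝒜, A₁ ∪ A₂ ∈ 𝒜) :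
    ∀ j : ℕ, ∀ S : Finset ℕ, S ⊆ X → S.card + j ≤ X.card →
      ∃ S', S ⊆ S' ∧ S' ⊆ X ∧ S'.card = S.card + j ∧
        ((𝒜.filter fun A => S ⊆ A).card : ℝ) / 2 ^ j ≤ ((𝒜.filter fun A => S' ⊆ A).card : ℝ) := by
  obtain ⟨hsub, hemp, hXmem, hun⟩ := hUC
  intro j
  induction j with
  | zero =>
    intro S hS _
    exact ⟨S, subset_rfl, hS, by simp, by simp⟩
  | succ j ih =>
    intro S hSX hcard
    set ℬ := insert (∅ : Finset ℕ) ((𝒜.filter fun A => S ⊆ A).image (· \ S)) with hℬdef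
    have hYne : (X \ S).Nonempty := by
      rw [Finset.sdiff_nonempty]
      intro h
      have := Finset.card_le_card h
      omega
    have hUCB : (∀ B ∈ ℬ, B ⊆ X \ S) ∧ ∅ ∈ ℬ ∧ (X \ S) ∈ ℬ ∧
        ∀ B₁ ∈ ℬ, ∀ B₂ ∈ ℬ, B₁ ∪ B₂ ∈ ℬ := by
      refine ⟨?_, Finset.mem_insert_self _ _, ?_, ?_⟩
      · intro B hB
        rcases Finset.mem_insert.1 hB with h | h
        · simp [h]
        · obtain ⟨A, hA, rfl⟩ := Finset.mem_image.1 h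
          exact Finset.sdiff_subset_sdiff (hsub A (Finset.mem_filter.1 hA).1) subset_rfl
      · exact Finset.mem_insert_of_mem (Finset.mem_image.2 ⟨X, Finset.mem_filter.2 ⟨hXmem, hSX⟩, rfl⟩)
      · intro B₁ hB₁ B₂ hB₂
        rcases Finset.mem_insert.1 hB₁ with h1 | h1
        · simpa [h1] using hB₂
        rcases Finset.mem_insert.1 hB₂ with h2 | h2
        · simpa [h2] using hB₁
        obtain ⟨A₁, hA₁, rfl⟩ := Finset.mem_image.1 h1
        obtain ⟨A₂, hA₂, rfl⟩ := Finset.mem_image.1 h2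
        obtain ⟨hA₁m, hA₁s⟩ := Finset.mem_filter.1 hA₁
        obtain ⟨hA₂m, hA₂s⟩ := Finset.mem_filter.1 hA₂
        refine Finset.mem_insert_of_mem (Finset.mem_image.2 ⟨A₁ ∪ A₂, ?_, ?_⟩)
        · exact Finset.mem_filter.2 ⟨hun _ hA₁m _ hA₂m, hA₁s.trans Finset.subset_union_left⟩
        · exact Finset.union_sdiff_distrib A₁ A₂ S
    obtain ⟨x, hxY, hx⟩ := hFrankl (X \ S) ℬ hYne hUCB
    have hxX : x ∈ X := (Finset.mem_sdiff.1 hxY).1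
    have hxS : x ∉ S := (Finset.mem_sdiff.1 hxY).2
    -- injectivity of (· \ S) on sets containing S
    -- |ℬ| ≥ count S
    have h1 : ((𝒜.filter fun A => S ⊆ A).card : ℝ) ≤ (ℬ.card : ℝ) := by
      have : (𝒜.filter fun A => S ⊆ A).card = ((𝒜.filter fun A => S ⊆ A).image (· \ S)).card := by
        rw [Finset.card_image_of_injOn]
        intro A hA B hB hAB
        simp only [Finset.coe_filter, Set.mem_setOf_eq] at hA hB
        have hAB' : A \ S = B \ S := hAB
        have : A \ S ∪ S = B \ S ∪ S := by rw [hAB']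
        rwa [Finset.sdiff_union_of_subset hA.2, Finset.sdiff_union_of_subset hB.2] at this
      rw [this]
      exact_mod_cast Finset.card_le_card (Finset.subset_insert _ _)
    -- ℬ.filter (x ∈ ·) has card ≤ count (insert x S)
    have h2 : ((ℬ.filter fun B => x ∈ B).card : ℝ) ≤ ((𝒜.filter fun A => insert x S ⊆ A).card : ℝ) := by
      have hsubs : ℬ.filter (fun B => x ∈ B) ⊆ (𝒜.filter fun A => insert x S ⊆ A).image (· \ S) := by
        intro B hB
        obtain ⟨hBm, hxB⟩ := Finset.mem_filter.1 hB
        rcases Finset.mem_insert.1 hBm with h | h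
        · simp [h] at hxB
        obtain ⟨A, hA, rfl⟩ := Finset.mem_image.1 h
        obtain ⟨hAm, hAs⟩ := Finset.mem_filter.1 hA
        have hxA : x ∈ A := (Finset.mem_sdiff.1 hxB).1
        exact Finset.mem_image.2 ⟨A, Finset.mem_filter.2 ⟨hAm, Finset.insert_subset hxA hAs⟩, rfl⟩
      calc ((ℬ.filter fun B => x ∈ B).card : ℝ)
          ≤ (((𝒜.filter fun A => insert x S ⊆ A).image (· \ S)).card : ℝ) := by
            exact_mod_cast Finset.card_le_card hsubs
        _ ≤ _ := by exact_mod_cast Finset.card_image_le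
    -- half step
    have hhalf : ((𝒜.filter fun A => S ⊆ A).card : ℝ) / 2 ≤ ((𝒜.filter fun A => insert x S ⊆ A).card : ℝ) := by
      calc ((𝒜.filter fun A => S ⊆ A).card : ℝ) / 2 ≤ (ℬ.card : ℝ) / 2 := by linarith
        _ ≤ ((ℬ.filter fun B => x ∈ B).card : ℝ) := hx
        _ ≤ _ := h2
    have hS'X : insert x S ⊆ X := Finset.insert_subset hxX hSX
    have hScard : (insert x S).card = S.card + 1 := Finset.card_insert_of_notMem hxS
    obtain ⟨S', hSS', hS'X', hS'card, hS'count⟩ := ih (insert x S) hS'X (by omega)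
    refine ⟨S', (Finset.subset_insert _ _).trans hSS', hS'X', by omega, ?_⟩
    have h2j : (0:ℝ) < 2 ^ j := by positivity
    calc ((𝒜.filter fun A => S ⊆ A).card : ℝ) / 2 ^ (j+1)
        ≤ ((𝒜.filter fun A => insert x S ⊆ A).card : ℝ) / 2 ^ j := by
          rw [pow_succ]
          rw [div_le_div_iff₀ (by positivity) h2j]
          calc ((𝒜.filter fun A => S ⊆ A).card : ℝ) * (2^j)
              = (((𝒜.filter fun A => S ⊆ A).card : ℝ)/2) * (2^j * 2) := by ring
            _ ≤ ((𝒜.filter fun A => insert x S ⊆ A).card : ℝ) * (2 ^ j * 2) := by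
                apply mul_le_mul_of_nonneg_right hhalf; positivity
      _ ≤ _ := hS'count

theorem stmt12
    (hFrankl : ∀ (X : Finset ℕ) (𝒜 : Finset (Finset ℕ)), X.Nonempty → UnionClosedOn X 𝒜 →
      ∃ x ∈ X, (𝒜.card : ℝ) / 2 ≤ (((𝒜.filter fun A => x ∈ A)).card : ℝ)) :
    ∀ k : ℕ, 1 ≤ k →
      ∀ (X : Finset ℕ) (𝒜 : Finset (Finset ℕ)), X.Nonempty → UnionClosedOn X 𝒜 →
        k ≤ X.card →
          ∃ S ⊆ X, S.card = k ∧
            (2 : ℝ) ^ (-(k : ℤ)) * (𝒜.card : ℝ) ≤ (((𝒜.filter fun A => S ⊆ A)).card : ℝ) := by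
  intro k hk X 𝒜 hXne hUC hkX
  obtain ⟨S, -, hSX, hScard, hbound⟩ :=
    step_lemma hFrankl X 𝒜 hUC k ∅ (Finset.empty_subset X) (by simpa using hkX)
  refine ⟨S, hSX, by simpa using hScard, ?_⟩
  have hfull : (𝒜.filter fun A => (∅ : Finset ℕ) ⊆ A) = 𝒜 := by simp
  have := hbound
  rw [hfull] at this
  calc (2 : ℝ) ^ (-(k : ℤ)) * (𝒜.card : ℝ) = (𝒜.card : ℝ) / 2 ^ k := by
        rw [zpow_neg, zpow_natCast]; ring
    _ ≤ _ := this
end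

section
/- Let k, k', ℓ be natural numbers with k, k' ≥ ℓ ≥ 1. Then 2^{-(k+k')} · ∑_{i=ℓ}^{k+k'} C(k+k', i) ≥ a + b − a·b, where a = 2^{-k} · ∑_{j=ℓ}^{k} C(k, j), b = 2^{-k'} · ∑_{j'=ℓ}^{k'} C(k', j'), and C(n, i) denotes the binomial coefficient. -/
open Finset in
-- Vandermonde tail bound
lemma key_nat (k k' ℓ : ℕ) :
    ∑ i ∈ range ℓ, (k + k').choose i ≤
      (∑ j ∈ range ℓ, k.choose j) * (∑ j' ∈ range ℓ, k'.choose j') := by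
  rw [Finset.sum_mul_sum]
  have h1 : ∀ i ∈ range ℓ, (k + k').choose i
      = ∑ p ∈ Finset.HasAntidiagonal.antidiagonal i, k.choose p.1 * k'.choose p.2 := by
    intro i _; rw [Nat.add_choose_eq]
  rw [Finset.sum_congr rfl h1]
  rw [← Finset.sum_biUnion]
  · rw [← Finset.sum_product']
    apply Finset.sum_le_sum_of_subset
    intro p hp
    simp only [Finset.mem_biUnion, Finset.HasAntidiagonal.mem_antidiagonal, Finset.mem_range] at hp
    obtain ⟨i, hi, hpi⟩ := hp
    simp only [Finset.mem_product, Finset.mem_range]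
    omega
  · intro a ha b hb hab
    simp only [Finset.disjoint_left, Finset.HasAntidiagonal.mem_antidiagonal]
    intro p hp hq; exact hab (hp ▸ hq ▸ rfl)

open Finset in
lemma icc_sum (ℓ n : ℕ) (h : ℓ ≤ n) :
    ∑ i ∈ Finset.Icc ℓ n, ((n.choose i : ℝ)) =
      2 ^ n - ∑ i ∈ range ℓ, (n.choose i : ℝ) := by
  have : ∑ i ∈ range (n+1), ((n.choose i : ℝ)) = 2 ^ n := by
    rw [← Nat.cast_sum, Nat.sum_range_choose]; push_cast; ring
  rw [← this]
  rw [show Finset.Icc ℓ n = Finset.Ico ℓ (n+1) by rfl, Finset.range_eq_Ico,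
    ← Finset.sum_Ico_consecutive _ (Nat.zero_le ℓ) (by omega : ℓ ≤ n+1),
    ← Finset.range_eq_Ico]
  ring


open Finset in
theorem stmt14 (k k' ℓ : ℕ) (hℓ : 1 ≤ ℓ) (hk : ℓ ≤ k) (hk' : ℓ ≤ k') :
    (2 : ℝ) ^ (-((k + k' : ℕ) : ℤ)) * ∑ i ∈ Finset.Icc ℓ (k + k'), ((k + k').choose i : ℝ)
      ≥ ((2 : ℝ) ^ (-(k : ℤ)) * ∑ j ∈ Finset.Icc ℓ k, (k.choose j : ℝ))
        + ((2 : ℝ) ^ (-(k' : ℤ)) * ∑ j' ∈ Finset.Icc ℓ k', (k'.choose j' : ℝ))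
        - ((2 : ℝ) ^ (-(k : ℤ)) * ∑ j ∈ Finset.Icc ℓ k, (k.choose j : ℝ))
          * ((2 : ℝ) ^ (-(k' : ℤ)) * ∑ j' ∈ Finset.Icc ℓ k', (k'.choose j' : ℝ)) := by
  have hC : (∑ i ∈ range ℓ, ((k + k').choose i : ℝ)) ≤
      (∑ j ∈ range ℓ, (k.choose j : ℝ)) * (∑ j' ∈ range ℓ, (k'.choose j' : ℝ)) := by
    have := key_nat k k' ℓ
    push_cast [← Nat.cast_sum]
    exact_mod_cast this
  rw [icc_sum ℓ k hk, icc_sum ℓ k' hk', icc_sum ℓ (k + k') (by omega)]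
  set A := ∑ j ∈ range ℓ, (k.choose j : ℝ)
  set B := ∑ j' ∈ range ℓ, (k'.choose j' : ℝ)
  set C := ∑ i ∈ range ℓ, ((k + k').choose i : ℝ)
  have e : ∀ m : ℕ, (2:ℝ) ^ (-(m:ℤ)) = ((2:ℝ) ^ m)⁻¹ := by
    intro m; rw [zpow_neg, zpow_natCast]
  rw [e, e, e]
  have hp : (0:ℝ) < 2 ^ k := by positivity
  have hq : (0:ℝ) < 2 ^ k' := by positivity
  have hpq : (2:ℝ) ^ (k + k') = 2 ^ k * 2 ^ k' := by rw [pow_add]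
  rw [ge_iff_le, hpq]
  have key : ∀ x y u v c : ℝ, 0 < x → 0 < y → c ≤ u * v →
      x⁻¹ * (x - u) + y⁻¹ * (y - v) - x⁻¹ * (x - u) * (y⁻¹ * (y - v))
        ≤ (x * y)⁻¹ * (x * y - c) := by
    intro x y u v c hx hy h
    have hx' : x ≠ 0 := ne_of_gt hx
    have hy' : y ≠ 0 := ne_of_gt hy
    have expand : x⁻¹ * (x - u) + y⁻¹ * (y - v) - x⁻¹ * (x - u) * (y⁻¹ * (y - v))
        = 1 - (u * v) / (x * y) := by field_simp; ring
    have expand2 : (x * y)⁻¹ * (x * y - c) = 1 - c / (x * y) := by field_simp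
    rw [expand, expand2]
    have h2 : c / (x * y) ≤ u * v / (x * y) := by
      exact div_le_div_of_nonneg_right h (mul_pos hx hy).le
    linarith
  exact key _ _ _ _ _ hp hq hC
end

section
/- Let k ≥ ℓ ≥ 1 be natural numbers. Every weakly-(k|ℓ)-admissible real number ε satisfies ε ≤ 2^{-k} · ∑_{i=ℓ}^{k} C(k,i), where C(k,i) denotes the binomial coefficient. -/
/-- `𝒜` is weakly `k|ℓ`-separated on `X`: `|X| ≥ k` and for any `k` distinct elements of `X`
(the first `ℓ` of them forming `T`, the remaining `k - ℓ` forming `U`)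
there is `A ∈ 𝒜` meeting `T` and disjoint from `U`. -/
def WeaklySeparated (k ℓ : ℕ) (X : Finset ℕ) (𝒜 : Finset (Finset ℕ)) : Prop :=
  k ≤ X.card ∧
    ∀ T U : Finset ℕ, T ⊆ X → U ⊆ X → Disjoint T U → T.card = ℓ → U.card = k - ℓ →
      ∃ A ∈ 𝒜, (T ∩ A).Nonempty ∧ U ∩ A = ∅

/-- `ε ≥ 0` is weakly-`(k|ℓ)`-admissible: for every weakly `k|ℓ`-separated union-closed
family `𝒜` on a finite nonempty set `X` there is `S ⊆ X` with `|S| = k` such that at least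
`ε·|𝒜|` members `A` of `𝒜` satisfy `|A ∩ S| ≥ ℓ`. -/
def WeaklyAdmissible (k ℓ : ℕ) (ε : ℝ) : Prop :=
  0 ≤ ε ∧
    ∀ (X : Finset ℕ) (𝒜 : Finset (Finset ℕ)), X.Nonempty → UnionClosedOn X 𝒜 →
      WeaklySeparated k ℓ X 𝒜 →
        ∃ S ⊆ X, S.card = k ∧
          ε * (𝒜.card : ℝ) ≤ (((𝒜.filter fun A => ℓ ≤ (A ∩ S).card)).card : ℝ)

lemma count_filter_card_ge (ℓ : ℕ) (X : Finset ℕ) :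
    (X.powerset.filter fun A => ℓ ≤ A.card).card = ∑ i ∈ Finset.Icc ℓ X.card, X.card.choose i := by
  have h : X.powerset.filter (fun A => ℓ ≤ A.card)
      = (Finset.Icc ℓ X.card).biUnion (fun i => X.powersetCard i) := by
    ext A
    simp only [Finset.mem_filter, Finset.mem_powerset, Finset.mem_biUnion, Finset.mem_Icc,
      Finset.mem_powersetCard]
    constructor
    · rintro ⟨hsub, hle⟩
      exact ⟨A.card, ⟨hle, Finset.card_le_card hsub⟩, hsub, rfl⟩
    · rintro ⟨i, ⟨h1, _⟩, hsub, hcard⟩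
      exact ⟨hsub, hcard ▸ h1⟩
  rw [h, Finset.card_biUnion]
  · exact Finset.sum_congr rfl fun i _ => Finset.card_powersetCard i X
  · intro i _ j _ hij
    simp only [Finset.disjoint_left, Finset.mem_powersetCard]
    rintro A ⟨_, rfl⟩ ⟨_, h2⟩
    exact hij h2

theorem stmt16 (k ℓ : ℕ) (hℓ : 1 ≤ ℓ) (hk : ℓ ≤ k) (ε : ℝ) (hε : WeaklyAdmissible k ℓ ε) :
    ε ≤ (2 : ℝ) ^ (-(k : ℤ)) * ∑ i ∈ Finset.Icc ℓ k, (k.choose i : ℝ) := by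
  set X := Finset.range k with hX
  have hcard : X.card = k := Finset.card_range k
  have hkpos : 0 < k := hℓ.trans hk
  obtain ⟨hε0, hmain⟩ := hε
  have hXne : X.Nonempty := by
    rw [hX]; exact Finset.nonempty_range_iff.mpr hkpos.ne'
  have huc : UnionClosedOn X X.powerset := by
    refine ⟨fun A hA => Finset.mem_powerset.mp hA, ?_, ?_, ?_⟩
    · exact Finset.empty_mem_powerset X
    · exact Finset.mem_powerset_self X
    · intro A₁ h₁ A₂ h₂
      exact Finset.mem_powerset.mpr (Finset.union_subset (Finset.mem_powerset.mp h₁)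
        (Finset.mem_powerset.mp h₂))
  have hws : WeaklySeparated k ℓ X X.powerset := by
    refine ⟨hcard.ge, fun T U hT hU hdisj hTc hUc => ?_⟩
    refine ⟨T, Finset.mem_powerset.mpr hT, ?_, ?_⟩
    · rw [Finset.inter_self]
      exact Finset.card_pos.mp (hTc ▸ hℓ)
    · rw [Finset.inter_comm]
      exact Finset.disjoint_iff_inter_eq_empty.mp hdisj
  obtain ⟨S, hSX, hSc, hineq⟩ := hmain X X.powerset hXne huc hws
  have hSeq : S = X := Finset.eq_of_subset_of_card_le hSX (by rw [hcard, hSc])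
  rw [hSeq] at hineq
  have hfilter : (X.powerset.filter fun A => ℓ ≤ (A ∩ X).card)
      = X.powerset.filter fun A => ℓ ≤ A.card := by
    apply Finset.filter_congr
    intro A hA
    rw [Finset.inter_eq_left.mpr (Finset.mem_powerset.mp hA)]
  rw [hfilter, count_filter_card_ge, Finset.card_powerset, hcard] at hineq
  push_cast at hineq
  have h2k : (0:ℝ) < 2 ^ k := by positivity
  rw [zpow_neg, zpow_natCast]
  rw [inv_mul_eq_div, le_div_iff₀ h2k]
  linarith [hineq]
end
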